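/- arXiv:1810.10583 — 4 statements merged into one kernel-verified Lean document; each statement's English description precedes it below -/
import Mathlib

section
/- Let k ≥ 4. Inside AGL₂(ℤ/2^kℤ), let N₈ = {(v,M) : v ≡ 0 (mod 8) and M ≡ I (mod 8)} and N₁₆ = {(v,M) : v ≡ 0 (mod 16) and M ≡ I (mod 16)} (congruences entrywise). If H is a subgroup of Γ₀^☺(2) with N₈ ⊆ H, then the Frattini subgroup Φ(H) contains N₁₆. -/
open scoped MatrixGroups

/-- The entry pattern identifying `AGL₂(ℤ/nℤ)` inside `GL₃(ℤ/nℤ)`: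
third column equal to `(0,0,1)ᵀ`. -/
def AGLShape {n : ℕ} (g : GL (Fin 3) (ZMod n)) : Prop :=
  (g : Matrix (Fin 3) (Fin 3) (ZMod n)) 0 2 = 0 ∧
  (g : Matrix (Fin 3) (Fin 3) (ZMod n)) 1 2 = 0 ∧
  (g : Matrix (Fin 3) (Fin 3) (ZMod n)) 2 2 = 1

/-- Membership in `Γ₀^☺(2) ⊆ AGL₂(ℤ/2^kℤ)`: the AGL shape together with
`c ≡ 0 (mod 2)`, where `c` is the lower-left entry of the `2×2` block. -/
def GammaSmileyMem {n : ℕ} (h2 : (2 : ℕ) ∣ n) (g : GL (Fin 3) (ZMod n)) : Prop :=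
  AGLShape g ∧ ZMod.castHom h2 (ZMod 2) ((g : Matrix (Fin 3) (Fin 3) (ZMod n)) 1 0) = 0


open Matrix

lemma cast_zero_dvd {n m : ℕ} [NeZero n] (h : m ∣ n) (x : ZMod n)
    (hx : ZMod.castHom h (ZMod m) x = 0) : ∃ y : ZMod n, x = (m : ZMod n) * y := by
  have h1 : ((x.val : ℕ) : ZMod m) = 0 := by
    rwa [ZMod.natCast_val, ← ZMod.castHom_apply (h := h)]
  obtain ⟨t, ht⟩ := (ZMod.natCast_eq_zero_iff _ _).mp h1
  refine ⟨(t : ZMod n), ?_⟩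
  rw [← Nat.cast_mul, ← ht, ZMod.natCast_val, ZMod.cast_id]

lemma sq_one_add_smul {R : Type*} [CommRing R] (c : R) (A : Matrix (Fin 3) (Fin 3) R) :
    (1 + c • A) ^ 2 = 1 + (2 * c) • A + (c * c) • (A * A) := by
  rw [sq]
  simp only [add_mul, mul_add, one_mul, mul_one, Matrix.smul_mul, Matrix.mul_smul, smul_smul,
    two_mul, add_smul]
  abel


-- step: squaring goes from level j ≥ 1 to level j+1
lemma step_pow {k : ℕ} (j : ℕ) (hj : 1 ≤ j) (A : Matrix (Fin 3) (Fin 3) (ZMod (2 ^ k))) :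
    ∃ B, (1 + ((2 : ZMod (2 ^ k)) ^ j) • A) ^ 2 = 1 + ((2 : ZMod (2 ^ k)) ^ (j + 1)) • B := by
  refine ⟨A + ((2 : ZMod (2 ^ k)) ^ (j - 1)) • (A * A), ?_⟩
  have h2 : (2 : ZMod (2 ^ k)) ^ j * 2 ^ j = 2 ^ (j + 1) * 2 ^ (j - 1) := by
    rw [← pow_add, ← pow_add]
    congr 1
    omega
  rw [sq_one_add_smul, smul_add, smul_smul, add_assoc, h2]
  congr 2
  rw [pow_succ, mul_comm]

lemma iter_pow {k : ℕ} (m : ℕ) (A : Matrix (Fin 3) (Fin 3) (ZMod (2 ^ k))) :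
    ∃ B, (1 + (2 : ZMod (2 ^ k)) • A) ^ (2 ^ m) = 1 + ((2 : ZMod (2 ^ k)) ^ (m + 1)) • B := by
  induction m with
  | zero => exact ⟨A, by simp⟩
  | succ m ih =>
      obtain ⟨B, hB⟩ := ih
      obtain ⟨C, hC⟩ := step_pow (m + 1) (by omega) B
      exact ⟨C, by rw [pow_succ, pow_mul, hB, hC]⟩

lemma two_pow_k_eq_zero {k : ℕ} (m : ℕ) (hm : k ≤ m) : (2 : ZMod (2 ^ k)) ^ m = 0 := by
  have : ((2 ^ m : ℕ) : ZMod (2 ^ k)) = 0 :=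
    (ZMod.natCast_eq_zero_iff _ _).mpr (pow_dvd_pow 2 hm)
  simpa using this

-- anything ≡ 1 (mod 2) has 2-power order as a matrix
lemma pow_eq_one_of_one_add {k : ℕ} (hk : 1 ≤ k) (A : Matrix (Fin 3) (Fin 3) (ZMod (2 ^ k))) :
    (1 + (2 : ZMod (2 ^ k)) • A) ^ (2 ^ (k - 1)) = 1 := by
  obtain ⟨B, hB⟩ := iter_pow (k - 1) A
  rw [hB, two_pow_k_eq_zero (k - 1 + 1) (by omega)]
  simp

-- decomposition of a matrix that is ≡ 1 mod m
lemma exists_decomp {n m : ℕ} [NeZero n] (h : m ∣ n) (M : Matrix (Fin 3) (Fin 3) (ZMod n))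
    (hM : M.map (ZMod.castHom h (ZMod m)) = 1) :
    ∃ A : Matrix (Fin 3) (Fin 3) (ZMod n), M = 1 + (m : ZMod n) • A := by
  have key : ∀ i j, ∃ y, M i j - (1 : Matrix (Fin 3) (Fin 3) (ZMod n)) i j = (m : ZMod n) * y := by
    intro i j
    apply cast_zero_dvd h
    have h1 : (ZMod.castHom h (ZMod m)) (M i j) = (1 : Matrix (Fin 3) (Fin 3) (ZMod m)) i j := by
      rw [← hM]; rfl
    rw [map_sub, h1]
    by_cases hij : i = j <;> simp [Matrix.one_apply, hij, ZMod.cast_one h]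
  choose A hA using key
  refine ⟨Matrix.of A, ?_⟩
  ext i j
  have := hA i j
  simp only [Matrix.add_apply, Matrix.smul_apply, Matrix.of_apply, smul_eq_mul]
  rw [← this]
  ring

open Matrix
set_option maxRecDepth 4000 in
lemma mod2_pow_four : ∀ m : Matrix (Fin 3) (Fin 3) (ZMod 2),
    m 0 2 = 0 → m 1 2 = 0 → m 2 2 = 1 → m 1 0 = 0 → m.det ≠ 0 → m ^ 4 = 1 := by
  decide

lemma gamma_pow {k : ℕ} (hk : 1 ≤ k) (g : GL (Fin 3) (ZMod (2 ^ k)))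
    (h2 : (2 : ℕ) ∣ 2 ^ k)
    (h02 : (g : Matrix (Fin 3) (Fin 3) (ZMod (2 ^ k))) 0 2 = 0)
    (h12 : (g : Matrix (Fin 3) (Fin 3) (ZMod (2 ^ k))) 1 2 = 0)
    (h22 : (g : Matrix (Fin 3) (Fin 3) (ZMod (2 ^ k))) 2 2 = 1)
    (hc : ZMod.castHom h2 (ZMod 2) ((g : Matrix (Fin 3) (Fin 3) (ZMod (2 ^ k))) 1 0) = 0) :
    g ^ (2 ^ (k + 1)) = 1 := by
  haveI : NeZero (2 ^ k) := ⟨by positivity⟩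
  set φ := ZMod.castHom h2 (ZMod 2) with hφ
  set M : Matrix (Fin 3) (Fin 3) (ZMod (2 ^ k)) := (g : Matrix (Fin 3) (Fin 3) (ZMod (2 ^ k)))
    with hMdef
  have hdet : (M.map φ).det ≠ 0 := by
    rw [← RingHom.mapMatrix_apply, ← RingHom.map_det]
    have : IsUnit M.det := (Matrix.isUnit_iff_isUnit_det M).mp g.isUnit
    exact (this.map φ).ne_zero
  have hpow4 : (M.map φ) ^ 4 = 1 :=
    mod2_pow_four _ (by simp [Matrix.map_apply, h02]) (by simp [Matrix.map_apply, h12])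
      (by simp [Matrix.map_apply, h22]) (by simpa [Matrix.map_apply] using hc) hdet
  have hM4 : (M ^ 4).map φ = 1 := by
    rw [← RingHom.mapMatrix_apply] at hpow4 ⊢
    rw [map_pow, hpow4]
  obtain ⟨A, hA⟩ := exists_decomp h2 (M ^ 4) (by simpa using hM4)
  have h2c : ((2 : ℕ) : ZMod (2 ^ k)) = (2 : ZMod (2 ^ k)) := by norm_num
  rw [h2c] at hA
  have hfin : (M ^ 4) ^ (2 ^ (k - 1)) = 1 := by
    rw [hA]; exact pow_eq_one_of_one_add hk A
  have hexp : 2 ^ (k + 1) = 4 * 2 ^ (k - 1) := by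
    have : (4 : ℕ) = 2 ^ 2 := by norm_num
    rw [this, ← pow_add]
    congr 1
    omega
  apply Units.ext
  rw [Units.val_pow_eq_pow_val, hexp, pow_mul]
  simpa using hfin

lemma exists_sqrt {k : ℕ} (hk : 4 ≤ k) (h8 : (8 : ℕ) ∣ 2 ^ k) (h16 : (16 : ℕ) ∣ 2 ^ k)
    (g : GL (Fin 3) (ZMod (2 ^ k))) (hs : AGLShape g)
    (hg : (g : Matrix (Fin 3) (Fin 3) (ZMod (2 ^ k))).map (ZMod.castHom h16 (ZMod 16)) = 1) :
    ∃ u : GL (Fin 3) (ZMod (2 ^ k)), u ^ 2 = g ∧ AGLShape u ∧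
      (u : Matrix (Fin 3) (Fin 3) (ZMod (2 ^ k))).map (ZMod.castHom h8 (ZMod 8)) = 1 := by
  haveI : NeZero (2 ^ k) := ⟨by positivity⟩
  obtain ⟨A0, hA0⟩ := exists_decomp h16 _ hg
  have h16c : ((16 : ℕ) : ZMod (2 ^ k)) = (16 : ZMod (2 ^ k)) := by norm_num
  rw [h16c] at hA0
  set B : Matrix (Fin 3) (Fin 3) (ZMod (2 ^ k)) :=
    Matrix.of fun i j => if j = 2 then 0 else A0 i j with hBdef
  have hBcol : ∀ i, B i 2 = 0 := by intro i; simp [hBdef]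
  have hB : (g : Matrix (Fin 3) (Fin 3) (ZMod (2 ^ k))) = 1 + (16 : ZMod (2 ^ k)) • B := by
    ext i j
    by_cases hj : j = 2
    · subst hj
      fin_cases i <;>
        simp [hs.1, hs.2.1, hs.2.2, Matrix.one_apply, hBdef, Matrix.add_apply, Matrix.smul_apply]
    · have h1 := congrFun (congrFun (congrArg (fun M => M) hA0) i) j
      simp only [Matrix.add_apply, Matrix.smul_apply, smul_eq_mul] at h1 ⊢
      rw [h1]
      simp [hBdef, hj]
  -- fixed point iteration
  set f : Matrix (Fin 3) (Fin 3) (ZMod (2 ^ k)) → Matrix (Fin 3) (Fin 3) (ZMod (2 ^ k)) :=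
    fun X => B - (4 : ZMod (2 ^ k)) • (X * X) with hfdef
  have key : ∀ m, ∃ C, f^[m + 1] 0 - f^[m] 0 = ((4 : ZMod (2 ^ k)) ^ m) • C := by
    intro m
    induction m with
    | zero => exact ⟨B, by simp [hfdef]⟩
    | succ m ih =>
        obtain ⟨C, hC⟩ := ih
        refine ⟨-(f^[m + 1] 0 * C + C * f^[m] 0), ?_⟩
        have e1 : f^[m + 1 + 1] 0 = f (f^[m + 1] 0) := Function.iterate_succ_apply' f (m + 1) 0
        have e2 : f^[m + 1] 0 = f (f^[m] 0) := Function.iterate_succ_apply' f m 0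
        have hfX : ∀ X Y : Matrix (Fin 3) (Fin 3) (ZMod (2 ^ k)),
            f X - f Y = -((4 : ZMod (2 ^ k)) • (X * X - Y * Y)) := by
          intro X Y
          simp only [hfdef]
          rw [smul_sub, sub_sub_sub_cancel_left, neg_sub]
        have hdiff : ∀ X Y : Matrix (Fin 3) (Fin 3) (ZMod (2 ^ k)),
            X * X - Y * Y = X * (X - Y) + (X - Y) * Y := by
          intro X Y
          noncomm_ring
        calc f^[m + 1 + 1] 0 - f^[m + 1] 0
            = f (f^[m + 1] 0) - f (f^[m] 0) := by rw [e1, ← e2]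
          _ = -((4 : ZMod (2 ^ k)) • (f^[m + 1] 0 * f^[m + 1] 0 - f^[m] 0 * f^[m] 0)) := hfX _ _
          _ = -((4 : ZMod (2 ^ k)) • (f^[m + 1] 0 * ((4 : ZMod (2 ^ k)) ^ m • C)
                + ((4 : ZMod (2 ^ k)) ^ m • C) * f^[m] 0)) := by rw [hdiff, hC]
          _ = ((4 : ZMod (2 ^ k)) ^ (m + 1)) • -(f^[m + 1] 0 * C + C * f^[m] 0) := by
              rw [Matrix.mul_smul, Matrix.smul_mul, ← smul_add, smul_smul, ← smul_neg]
              congr 1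
              rw [pow_succ]
              ring
  have h4k : (4 : ZMod (2 ^ k)) ^ k = 0 := by
    have : ((4 ^ k : ℕ) : ZMod (2 ^ k)) = 0 := by
      rw [ZMod.natCast_eq_zero_iff]
      calc 2 ^ k ∣ 2 ^ (2 * k) := pow_dvd_pow 2 (by omega)
        _ = 4 ^ k := by rw [pow_mul]; norm_num
    simpa using this
  set A := f^[k] 0 with hAdef
  have hAfix : f A = A := by
    obtain ⟨C, hC⟩ := key k
    rw [h4k, zero_smul, sub_eq_zero] at hC
    rw [← Function.iterate_succ_apply' f k]
    exact hC
  have hcol : ∀ m i, (f^[m] 0) i 2 = 0 := by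
    intro m
    induction m with
    | zero => simp
    | succ m ih =>
        intro i
        rw [Function.iterate_succ_apply' f m]
        simp only [hfdef, Matrix.sub_apply, Matrix.smul_apply, hBcol, smul_eq_mul,
          Matrix.mul_apply]
        rw [Finset.sum_eq_zero (fun l _ => by rw [ih l, mul_zero])]
        simp
  have hAcol : ∀ i, A i 2 = 0 := hcol k
  have hBA : B = A + (4 : ZMod (2 ^ k)) • (A * A) := by
    have h := hAfix
    simp only [hfdef] at h
    exact sub_eq_iff_eq_add.mp h
  set Mh : Matrix (Fin 3) (Fin 3) (ZMod (2 ^ k)) := 1 + (8 : ZMod (2 ^ k)) • A with hMhdef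
  have hsq : Mh ^ 2 = (g : Matrix (Fin 3) (Fin 3) (ZMod (2 ^ k))) := by
    rw [hMhdef, sq_one_add_smul, hB, hBA, smul_add, smul_smul]
    rw [show (2 * 8 : ZMod (2 ^ k)) = 16 by norm_num,
      show (8 * 8 : ZMod (2 ^ k)) = 64 by norm_num,
      show (16 * 4 : ZMod (2 ^ k)) = 64 by norm_num, add_assoc]
  have h8k : (8 : ZMod (2 ^ k)) ^ k = 0 := by
    have : ((8 ^ k : ℕ) : ZMod (2 ^ k)) = 0 := by
      rw [ZMod.natCast_eq_zero_iff]
      calc 2 ^ k ∣ 2 ^ (3 * k) := pow_dvd_pow 2 (by omega)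
        _ = 8 ^ k := by rw [pow_mul]; norm_num
    simpa using this
  have hnil : IsNilpotent ((8 : ZMod (2 ^ k)) • A) := ⟨k, by rw [smul_pow, h8k, zero_smul]⟩
  have hu : IsUnit Mh := hnil.isUnit_one_add
  refine ⟨hu.unit, ?_, ?_, ?_⟩
  · apply Units.ext
    rw [Units.val_pow_eq_pow_val, hu.unit_spec, hsq]
  · refine ⟨?_, ?_, ?_⟩ <;>
      simp [hu.unit_spec, hMhdef, Matrix.add_apply, Matrix.smul_apply, Matrix.one_apply,
        hAcol 0, hAcol 1, hAcol 2]
  · ext i j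
    have h8z : (ZMod.castHom h8 (ZMod 8)) (8 : ZMod (2 ^ k)) = 0 := by
      have : ((8 : ℕ) : ZMod (2 ^ k)) = (8 : ZMod (2 ^ k)) := by norm_num
      rw [← this, map_natCast]
      exact ZMod.natCast_self 8
    simp only [Matrix.map_apply, hu.unit_spec, hMhdef, Matrix.add_apply, Matrix.smul_apply,
      smul_eq_mul, map_add, _root_.map_mul, h8z, zero_mul, add_zero]
    by_cases hij : i = j
    · subst hij; simp [Matrix.one_apply, ZMod.cast_one h8]
    · simp [Matrix.one_apply, hij]

/-- If `H ≤ Γ₀^☺(2) ⊆ AGL₂(ℤ/2^kℤ)` contains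
`N₈ = {(v,M) : v ≡ 0 (mod 8), M ≡ I (mod 8)}`, then the Frattini subgroup of `H`
contains `N₁₆ = {(v,M) : v ≡ 0 (mod 16), M ≡ I (mod 16)}`. -/
theorem stmt_0 (k : ℕ) (hk : 4 ≤ k)
    (H : Subgroup (GL (Fin 3) (ZMod (2 ^ k))))
    (hHGamma : ∀ g ∈ H, GammaSmileyMem (dvd_pow_self 2 (by omega : k ≠ 0)) g)
    (hN8 : ∀ g : GL (Fin 3) (ZMod (2 ^ k)), AGLShape g →
      (g : Matrix (Fin 3) (Fin 3) (ZMod (2 ^ k))).map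
        (ZMod.castHom
          (by have h := pow_dvd_pow 2 (show 3 ≤ k by omega); norm_num at h; exact h :
            (8 : ℕ) ∣ 2 ^ k) (ZMod 8)) = 1 → g ∈ H) :
    ∀ g : GL (Fin 3) (ZMod (2 ^ k)), AGLShape g →
      (g : Matrix (Fin 3) (Fin 3) (ZMod (2 ^ k))).map
        (ZMod.castHom
          (by have h := pow_dvd_pow 2 (show 4 ≤ k by omega); norm_num at h; exact h :
            (16 : ℕ) ∣ 2 ^ k) (ZMod 16)) = 1 →
      ∀ hg : g ∈ H, (⟨g, hg⟩ : H) ∈ frattini H := by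
  intro g hshape hg16 hg
  haveI : NeZero (2 ^ k) := ⟨by positivity⟩
  haveI : Fact (Nat.Prime 2) := ⟨Nat.prime_two⟩
  have h8 : (8 : ℕ) ∣ 2 ^ k := by
    have h := pow_dvd_pow 2 (show 3 ≤ k by omega); norm_num at h; exact h
  have h16 : (16 : ℕ) ∣ 2 ^ k := by
    have h := pow_dvd_pow 2 (show 4 ≤ k by omega); norm_num at h; exact h
  -- H is a 2-group
  have hpg : IsPGroup 2 H := by
    intro x
    obtain ⟨⟨hs1, hs2, hs3⟩, hc⟩ := hHGamma x.1 x.2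
    refine ⟨k + 1, ?_⟩
    have hx := gamma_pow (by omega) x.1 (dvd_pow_self 2 (by omega : k ≠ 0)) hs1 hs2 hs3 hc
    exact Subtype.ext (by rw [SubmonoidClass.coe_pow]; simpa using hx)
  haveI : Finite H := Subtype.finite
  haveI : Group.IsNilpotent H := hpg.isNilpotent
  -- square root of g inside H
  obtain ⟨u, hu2, hushape, humod⟩ := exists_sqrt hk h8 h16 g hshape hg16
  have huH : u ∈ H := hN8 u hushape humod
  have hy2 : (⟨u, huH⟩ : H) ^ 2 = (⟨g, hg⟩ : H) :=
    Subtype.ext (by rw [SubmonoidClass.coe_pow]; exact hu2)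
  set y : H := ⟨u, huH⟩
  -- it suffices to show membership in every maximal subgroup
  have hmem : ∀ M : Subgroup H, IsCoatom M → (⟨g, hg⟩ : H) ∈ M := by
    intro M hM
    haveI : M.Normal :=
      Subgroup.NormalizerCondition.normal_of_coatom M (normalizerCondition_of_isNilpotent) hM
    by_cases hyM : y ∈ M
    · rw [← hy2]; exact pow_mem hyM 2
    · set π := QuotientGroup.mk' M with hπdef
      have htop : M ⊔ Subgroup.zpowers y = ⊤ := by
        apply hM.2
        refine lt_of_le_of_ne le_sup_left fun e => hyM ?_
        rw [e]
        exact Subgroup.mem_sup_right (Subgroup.mem_zpowers y)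
      set S := Subgroup.comap π (Subgroup.zpowers (π y ^ 2)) with hSdef
      have hMS : M ≤ S := by
        intro m hm
        have h1 : π m = 1 := (QuotientGroup.eq_one_iff m).mpr hm
        show π m ∈ Subgroup.zpowers (π y ^ 2)
        rw [h1]
        exact one_mem _
      have hxS : (⟨g, hg⟩ : H) ∈ S := by
        show π (⟨g, hg⟩ : H) ∈ Subgroup.zpowers (π y ^ 2)
        rw [← hy2, map_pow]
        exact Subgroup.mem_zpowers _
      have hSne : S ≠ ⊤ := by
        intro hS
        have hyz : π y ∈ Subgroup.zpowers (π y ^ 2) := by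
          have hyS : y ∈ S := by rw [hS]; trivial
          exact hyS
        obtain ⟨n, hn⟩ := hyz
        obtain ⟨n0, hn0⟩ := (hpg.to_quotient M) (π y)
        have hy1 : π y ≠ 1 := fun e => hyM ((QuotientGroup.eq_one_iff y).mp e)
        have hn' : (π y) ^ ((2 : ℤ) * n) = π y := by
          have hn2 : ((π y) ^ (2 : ℕ)) ^ (n : ℤ) = π y := hn
          rw [← zpow_natCast (π y) 2, ← _root_.zpow_mul] at hn2
          exact_mod_cast hn2
        have h1 : (orderOf (π y) : ℤ) ∣ (2 * n - 1) := by
          rw [orderOf_dvd_iff_zpow_eq_one, _root_.zpow_sub_one, hn', mul_inv_cancel]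
        have h2 : orderOf (π y) ∣ 2 ^ n0 := orderOf_dvd_of_pow_eq_one hn0
        have h3 : orderOf (π y) ≠ 1 := fun e => hy1 (orderOf_eq_one_iff.mp e)
        obtain ⟨i, hi, hio⟩ := (Nat.dvd_prime_pow Nat.prime_two).mp h2
        have hi1 : 1 ≤ i := by
          rcases Nat.eq_zero_or_pos i with h0 | h0
          · exfalso; apply h3; rw [hio, h0, pow_zero]
          · exact h0
        have hdvd2 : (2 : ℤ) ∣ (2 * n - 1) := by
          refine dvd_trans ?_ h1
          rw [hio]
          exact_mod_cast dvd_pow_self 2 (by omega : i ≠ 0)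
        omega
      have hSM : S = M := by
        by_contra hne
        exact hSne (hM.2 _ (lt_of_le_of_ne hMS (Ne.symm hne)))
      rw [← hSM]
      exact hxS
  rw [frattini, Order.radical]
  simp only [Subgroup.mem_iInf]
  intro M hM
  exact hmem M hM
end

section
/- Let ℓ be a prime, r ≥ 1 an integer, v₀ ∈ (ℤ/ℓ^rℤ)² and M₀ ∈ M₂(ℤ/ℓ^rℤ). Suppose det(M₀ − I) ≠ 0 in ℤ/ℓ^rℤ and v₀ ∈ Row(M₀ − I). Then for every k ≥ r, every pair (v,M) ∈ (ℤ/ℓ^kℤ)² × M₂(ℤ/ℓ^kℤ) whose reduction mod ℓ^r equals (v₀,M₀) satisfies v ∈ Row(M − I). In particular N_k(v₀,M₀) = ℓ^{6(k−r)} for all k ≥ r. -/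
/-!
Reduction `ℤ/ℓ^k → ℤ/ℓ^r` has kernel `ℓ^r · ℤ/ℓ^k`. Since `det(M - I)` is nonzero mod `ℓ^r`, it is
`ℓ^j` times a unit with `j < r`, so it divides `ℓ^r` and hence every element of the kernel.
Lifting a solution of `x₀ (M₀ - I) = v₀` arbitrarily leaves an error vector in the kernel, and a
vector whose entries are divisible by `det A` lies in the row space of `A`, because
`adj(A) A = det(A) I`. So the row-space condition holds on every lift, and `N_k(v₀, M₀)` is the size
of a fiber of the surjective group homomorphism `(ℤ/ℓ^k)⁶ → (ℤ/ℓ^r)⁶`, namely `ℓ^(6(k-r))`.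
-/

open Matrix

/-- `N_k(v₀, M₀)`: the number of pairs `(v, M) ∈ (ℤ/ℓ^kℤ)² × M₂(ℤ/ℓ^kℤ)` whose
reduction mod `ℓ^r` is `(v₀, M₀)` and such that `v` lies in the row space of `M - I`. -/
noncomputable def liftCount (ℓ r k : ℕ) (hrk : r ≤ k) (v₀ : Fin 2 → ZMod (ℓ ^ r))
    (M₀ : Matrix (Fin 2) (Fin 2) (ZMod (ℓ ^ r))) : ℕ :=
  Nat.card {p : (Fin 2 → ZMod (ℓ ^ k)) × Matrix (Fin 2) (Fin 2) (ZMod (ℓ ^ k)) //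
    (∀ i, ZMod.castHom (pow_dvd_pow ℓ hrk) (ZMod (ℓ ^ r)) (p.1 i) = v₀ i) ∧
    p.2.map (ZMod.castHom (pow_dvd_pow ℓ hrk) (ZMod (ℓ ^ r))) = M₀ ∧
    ∃ x : Fin 2 → ZMod (ℓ ^ k), x ᵥ* (p.2 - 1) = p.1}

namespace ZMod

theorem natCast_dvd_of_castHom_eq_zero {m n : ℕ} (h : n ∣ m) {a : ZMod m}
    (ha : castHom h (ZMod n) a = 0) : (n : ZMod m) ∣ a := by
  rw [← intCast_zmod_cast a, map_intCast, intCast_zmod_eq_zero_iff_dvd] at ha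
  obtain ⟨t, ht⟩ := ha
  exact ⟨t, by rw [← intCast_zmod_cast a, ht, Int.cast_mul, Int.cast_natCast]⟩

theorem dvd_prime_pow_of_castHom_ne_zero {p r k : ℕ} (hp : p.Prime) (hrk : r ≤ k)
    {a : ZMod (p ^ k)} (ha : castHom (pow_dvd_pow p hrk) (ZMod (p ^ r)) a ≠ 0) :
    a ∣ ((p ^ r : ℕ) : ZMod (p ^ k)) := by
  obtain ⟨d, hd, u, hu, rfl⟩ := eq_unit_mul_divisor a
  obtain ⟨j, -, rfl⟩ := (Nat.dvd_prime_pow hp).mp hd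
  have hjr : j < r := by
    by_contra! hrj
    apply ha
    rw [map_mul, map_natCast, (natCast_eq_zero_iff _ _).mpr (pow_dvd_pow p hrj), mul_zero]
  rw [hu.mul_left_dvd]
  exact Nat.cast_dvd_cast (pow_dvd_pow p hjr.le)

end ZMod

namespace Matrix

variable {n R S : Type*} [Fintype n] [DecidableEq n] [CommRing R] [CommRing S]

theorem exists_vecMul_eq_of_det_dvd (A : Matrix n n R) {c : n → R} (h : ∀ i, A.det ∣ c i) :
    ∃ x, x ᵥ* A = c := by
  choose y hy using h
  refine ⟨y ᵥ* A.adjugate, ?_⟩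
  rw [vecMul_vecMul, adjugate_mul, vecMul_smul, vecMul_one]
  ext i
  exact (hy i).symm

theorem exists_vecMul_eq_of_map {f : R →+* S} (hf : Function.Surjective f) (A : Matrix n n R)
    (hker : ∀ a, f a = 0 → A.det ∣ a) {v : n → R} (hv : ∃ x₀, x₀ ᵥ* A.map f = f ∘ v) :
    ∃ x, x ᵥ* A = v := by
  obtain ⟨x₀, hx₀⟩ := hv
  obtain ⟨x₁, rfl⟩ := hf.comp_left x₀
  obtain ⟨y, hy⟩ := A.exists_vecMul_eq_of_det_dvd (c := v - x₁ ᵥ* A) fun i ↦ hker _ <| by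
    rw [Pi.sub_apply, map_sub, RingHom.map_vecMul, hx₀, Function.comp_apply, sub_self]
  exact ⟨x₁ + y, by rw [add_vecMul, hy, add_sub_cancel]⟩

end Matrix

theorem AddMonoidHom.card_fiber_mul_card_of_surjective {G H : Type*} [AddGroup G] [AddGroup H]
    {f : G →+ H} (hf : Function.Surjective f) (h : H) :
    Nat.card (f ⁻¹' {h}) * Nat.card H = Nat.card G := by
  rw [Nat.card_congr (fiberEquivKerOfSurjective hf h), ← f.ker.card_mul_index,
    AddSubgroup.index_ker, range_eq_top.mpr hf, AddSubgroup.card_top]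

namespace ZMod

variable {p r k : ℕ} {ι : Type*} [Fintype ι]

theorem exists_vecMul_eq_of_det_castHom_ne_zero [DecidableEq ι] (hp : p.Prime) (hrk : r ≤ k)
    (A : Matrix ι ι (ZMod (p ^ k)))
    (hdet : (A.map (castHom (pow_dvd_pow p hrk) (ZMod (p ^ r)))).det ≠ 0) {v : ι → ZMod (p ^ k)}
    (hv : ∃ x₀, x₀ ᵥ* A.map (castHom (pow_dvd_pow p hrk) (ZMod (p ^ r))) =
      castHom (pow_dvd_pow p hrk) (ZMod (p ^ r)) ∘ v) :
    ∃ x, x ᵥ* A = v := by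
  refine A.exists_vecMul_eq_of_map (castHom_surjective _) (fun a ha ↦ ?_) hv
  refine (dvd_prime_pow_of_castHom_ne_zero hp hrk ?_).trans (natCast_dvd_of_castHom_eq_zero _ ha)
  rwa [RingHom.map_det, RingHom.mapMatrix_apply]

theorem card_lifts_prod_matrix (hp : p ≠ 0) (hrk : r ≤ k) (v₀ : ι → ZMod (p ^ r))
    (M₀ : Matrix ι ι (ZMod (p ^ r))) :
    Nat.card {q : (ι → ZMod (p ^ k)) × Matrix ι ι (ZMod (p ^ k)) //
      (∀ i, castHom (pow_dvd_pow p hrk) (ZMod (p ^ r)) (q.1 i) = v₀ i) ∧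
      q.2.map (castHom (pow_dvd_pow p hrk) (ZMod (p ^ r))) = M₀} =
      (p ^ (k - r)) ^ (Fintype.card ι + Fintype.card ι * Fintype.card ι) := by
  set f := castHom (pow_dvd_pow p hrk) (ZMod (p ^ r))
  let Φ := (f.toAddMonoidHom.compLeft ι).prodMap (f.toAddMonoidHom.mapMatrix (m := ι) (n := ι))
  have hf : Function.Surjective f := castHom_surjective _
  have hΦ : Function.Surjective Φ := hf.comp_left.prodMap hf.comp_left.comp_left
  have hlifts : Nat.card {q : (ι → ZMod (p ^ k)) × Matrix ι ι (ZMod (p ^ k)) //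
      (∀ i, f (q.1 i) = v₀ i) ∧ q.2.map f = M₀} = Nat.card (Φ ⁻¹' {(v₀, M₀)}) :=
    Nat.card_congr <| Equiv.subtypeEquivRight fun q ↦
      ⟨fun h ↦ Prod.ext (funext h.1) h.2,
        fun h ↦ ⟨congrFun (congrArg Prod.fst h), congrArg Prod.snd h⟩⟩
  have hcard (m : ℕ) : Nat.card ((ι → ZMod m) × Matrix ι ι (ZMod m)) =
      m ^ (Fintype.card ι + Fintype.card ι * Fintype.card ι) := by
    simp only [Matrix, Nat.card_prod, Nat.card_fun, Nat.card_zmod, Nat.card_eq_fintype_card]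
    ring
  have hfiber := Φ.card_fiber_mul_card_of_surjective hΦ (v₀, M₀)
  rw [hcard, hcard] at hfiber
  rw [hlifts]
  have hpos : 0 < (p ^ r) ^ (Fintype.card ι + Fintype.card ι * Fintype.card ι) := by
    positivity
  refine Nat.eq_of_mul_eq_mul_right hpos ?_
  rwa [← mul_pow, ← pow_add, Nat.sub_add_cancel hrk]

end ZMod

theorem stmt_6_general (ℓ : ℕ) (hℓ : ℓ.Prime) (r k : ℕ) (hrk : r ≤ k)
    (v₀ : Fin 2 → ZMod (ℓ ^ r)) (M₀ : Matrix (Fin 2) (Fin 2) (ZMod (ℓ ^ r)))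
    (hdet : (M₀ - 1).det ≠ 0)
    (hrow : ∃ x : Fin 2 → ZMod (ℓ ^ r), x ᵥ* (M₀ - 1) = v₀) :
    (∀ (v : Fin 2 → ZMod (ℓ ^ k)) (M : Matrix (Fin 2) (Fin 2) (ZMod (ℓ ^ k))),
      (∀ i, ZMod.castHom (pow_dvd_pow ℓ hrk) (ZMod (ℓ ^ r)) (v i) = v₀ i) →
      M.map (ZMod.castHom (pow_dvd_pow ℓ hrk) (ZMod (ℓ ^ r))) = M₀ →
      ∃ x : Fin 2 → ZMod (ℓ ^ k), x ᵥ* (M - 1) = v) ∧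
    liftCount ℓ r k hrk v₀ M₀ = ℓ ^ (6 * (k - r)) := by
  set f := ZMod.castHom (pow_dvd_pow ℓ hrk) (ZMod (ℓ ^ r))
  have hlift (v : Fin 2 → ZMod (ℓ ^ k)) (M : Matrix (Fin 2) (Fin 2) (ZMod (ℓ ^ k)))
      (hv : ∀ i, f (v i) = v₀ i) (hM : M.map f = M₀) : ∃ x, x ᵥ* (M - 1) = v := by
    have hmap : (M - 1).map f = M₀ - 1 := by
      rw [← RingHom.mapMatrix_apply, map_sub, map_one, RingHom.mapMatrix_apply, hM]
    obtain ⟨x₀, hx₀⟩ := hrow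
    refine ZMod.exists_vecMul_eq_of_det_castHom_ne_zero hℓ hrk _ (hmap ▸ hdet) ⟨x₀, ?_⟩
    rw [hmap, hx₀]
    exact funext fun i ↦ (hv i).symm
  refine ⟨hlift, ?_⟩
  calc liftCount ℓ r k hrk v₀ M₀
      = Nat.card {q : (Fin 2 → ZMod (ℓ ^ k)) × Matrix (Fin 2) (Fin 2) (ZMod (ℓ ^ k)) //
          (∀ i, f (q.1 i) = v₀ i) ∧ q.2.map f = M₀} :=
        Nat.card_congr <| Equiv.subtypeEquivRight fun q ↦
          ⟨fun h ↦ ⟨h.1, h.2.1⟩, fun h ↦ ⟨h.1, h.2, hlift _ _ h.1 h.2⟩⟩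
    _ = (ℓ ^ (k - r)) ^ 6 := ZMod.card_lifts_prod_matrix hℓ.ne_zero hrk v₀ M₀
    _ = ℓ ^ (6 * (k - r)) := by rw [← pow_mul, mul_comm]

/-- If `det(M₀ - I) ≠ 0` in `ℤ/ℓ^rℤ` and `v₀ ∈ Row(M₀ - I)`, then every lift `(v, M)`
of `(v₀, M₀)` mod `ℓ^k` (`k ≥ r`) satisfies `v ∈ Row(M - I)`; in particular
`N_k(v₀, M₀) = ℓ^(6(k-r))`. -/
theorem stmt_6 (ℓ : ℕ) (hℓ : ℓ.Prime) (r k : ℕ) (hr : 1 ≤ r) (hrk : r ≤ k)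
    (v₀ : Fin 2 → ZMod (ℓ ^ r)) (M₀ : Matrix (Fin 2) (Fin 2) (ZMod (ℓ ^ r)))
    (hdet : (M₀ - 1).det ≠ 0)
    (hrow : ∃ x : Fin 2 → ZMod (ℓ ^ r), x ᵥ* (M₀ - 1) = v₀) :
    (∀ (v : Fin 2 → ZMod (ℓ ^ k)) (M : Matrix (Fin 2) (Fin 2) (ZMod (ℓ ^ k))),
      (∀ i, ZMod.castHom (pow_dvd_pow ℓ hrk) (ZMod (ℓ ^ r)) (v i) = v₀ i) →
      M.map (ZMod.castHom (pow_dvd_pow ℓ hrk) (ZMod (ℓ ^ r))) = M₀ →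
      ∃ x : Fin 2 → ZMod (ℓ ^ k), x ᵥ* (M - 1) = v) ∧
    liftCount ℓ r k hrk v₀ M₀ = ℓ ^ (6 * (k - r)) :=
  stmt_6_general ℓ hℓ r k hrk v₀ M₀ hdet hrow
end

section
/- Let ℓ be a prime and r ≥ 1 an integer. Take v₀ = 0 ∈ (ℤ/ℓ^rℤ)² and M₀ = I ∈ M₂(ℤ/ℓ^rℤ). Then the sequence N_k(0,I)/ℓ^{6(k−r)} converges as k → ∞ and its limit equals ℓ²/(ℓ² + ℓ + 1). -/
open Matrix Filter Topology

/-!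
Subtracting `I`, the pairs counted by `N_{r+j}(0, I)` are the pairs `(v, A)` over `ℤ/ℓ^(r+j)`
with `A ≡ 0 mod ℓ^r` and `v` in the row space of `A` (which forces `v ≡ 0`). Division by `ℓ^r`
is a bijection from the multiples of `ℓ^r` onto `ℤ/ℓ^j` that carries row spaces to row spaces,
so `N_{r+j}(0, I) = P_j := ∑_{u, v} |span {u, v}|` over `ℤ/ℓ^j`.

`ℤ/ℓ^(j+1)` is local. A row with a unit entry is moved to `e₀` by an automorphism of the plane,
and `|span {e₀, v}| = ℓ^(j+1) · |v₁ R|`; when both rows lie in the maximal ideal `ℓR`, division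
by `ℓ` brings back `P_j`. This yields recursions for `P_j` and `D_j := ∑_t |t R|`, solved by
`D_j = (ℓ^(2j+1) + 1)/(ℓ + 1)` and
`P_j = ℓ²(ℓ^(6j) - 1)/(ℓ² + ℓ + 1) + ℓ(ℓ^(4j) - 1)/(ℓ² + 1) + 1`, and `P_j / ℓ^(6j)` tends to
`ℓ²/(ℓ² + ℓ + 1)`.
-/

open Submodule IsLocalRing

section Scaling

variable (ℓ r j : ℕ)

def scalePow : ZMod (ℓ ^ j) →+ ZMod (ℓ ^ (r + j)) :=
  ZMod.lift _ ⟨(AddMonoidHom.mulLeft ((ℓ : ZMod (ℓ ^ (r + j))) ^ r)).comp (Int.castAddHom _), by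
    simp only [AddMonoidHom.coe_comp, Function.comp_apply, Int.coe_castAddHom,
      AddMonoidHom.coe_mulLeft]
    push_cast
    rw [← pow_add, ← Nat.cast_pow, ZMod.natCast_self]⟩

variable {ℓ r j}

@[simp]
theorem scalePow_intCast (k : ℤ) : scalePow ℓ r j k = (ℓ : ZMod (ℓ ^ (r + j))) ^ r * k :=
  ZMod.lift_coe _ _ k

theorem castHom_scalePow (a : ZMod (ℓ ^ j)) :
    ZMod.castHom (pow_dvd_pow ℓ (Nat.le_add_right r j)) (ZMod (ℓ ^ r)) (scalePow ℓ r j a) = 0 := by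
  obtain ⟨k, rfl⟩ := ZMod.intCast_surjective a
  rw [scalePow_intCast, map_mul, map_pow, map_natCast, ← Nat.cast_pow, ZMod.natCast_self, zero_mul]

theorem mul_scalePow (c : ZMod (ℓ ^ (r + j))) (a : ZMod (ℓ ^ j)) :
    c * scalePow ℓ r j a =
      scalePow ℓ r j (ZMod.castHom (pow_dvd_pow ℓ (Nat.le_add_left j r)) _ c * a) := by
  obtain ⟨k, rfl⟩ := ZMod.intCast_surjective a
  obtain ⟨m, rfl⟩ := ZMod.intCast_surjective c
  rw [map_intCast (ZMod.castHom (pow_dvd_pow ℓ (Nat.le_add_left j r)) (ZMod (ℓ ^ j))),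
    ← Int.cast_mul, scalePow_intCast, scalePow_intCast]
  push_cast
  ring

theorem scalePow_injective [NeZero ℓ] : Function.Injective (scalePow ℓ r j) := by
  refine (injective_iff_map_eq_zero _).2 fun a ha => ?_
  obtain ⟨k, rfl⟩ := ZMod.intCast_surjective a
  rw [scalePow_intCast, ← Int.cast_natCast, ← Int.cast_pow, ← Int.cast_mul,
    ZMod.intCast_zmod_eq_zero_iff_dvd, Nat.cast_pow, pow_add] at ha
  rw [ZMod.intCast_zmod_eq_zero_iff_dvd, Nat.cast_pow]
  exact (mul_dvd_mul_iff_left (pow_ne_zero r (by exact_mod_cast NeZero.ne ℓ))).1 ha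

theorem exists_scalePow_eq_iff (y : ZMod (ℓ ^ (r + j))) :
    (∃ a, scalePow ℓ r j a = y) ↔
      ZMod.castHom (pow_dvd_pow ℓ (Nat.le_add_right r j)) (ZMod (ℓ ^ r)) y = 0 := by
  refine ⟨fun ⟨a, ha⟩ => ha ▸ castHom_scalePow a, fun hy => ?_⟩
  obtain ⟨k, rfl⟩ := ZMod.intCast_surjective y
  rw [map_intCast, ZMod.intCast_zmod_eq_zero_iff_dvd] at hy
  obtain ⟨m, rfl⟩ := hy
  exact ⟨m, by rw [scalePow_intCast]; push_cast; rfl⟩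

end Scaling

section SpanImage

variable {R R' M M' : Type*} [CommRing R] [CommRing R'] [AddCommGroup M] [Module R M]
  [AddCommGroup M'] [Module R' M']

theorem span_image_eq_image_span (ρ : R' →+* R) (hρ : Function.Surjective ρ) (f : M →+ M')
    (hf : ∀ (c : R') (x : M), c • f x = f (ρ c • x)) (s : Set M) :
    (span R' (f '' s) : Set M') = f '' span R s := by
  apply subset_antisymm
  · intro y hy
    induction hy using span_induction with
    | mem y hy => exact Set.image_mono subset_span hy
    | zero => exact ⟨0, zero_mem _, map_zero f⟩
    | add y z _ _ hy hz =>
      obtain ⟨x, hx, rfl⟩ := hy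
      obtain ⟨x', hx', rfl⟩ := hz
      exact ⟨x + x', add_mem hx hx', map_add f x x'⟩
    | smul c y _ hy =>
      obtain ⟨x, hx, rfl⟩ := hy
      exact ⟨ρ c • x, smul_mem _ _ hx, (hf c x).symm⟩
  · rintro _ ⟨x, hx, rfl⟩
    induction hx using span_induction with
    | mem x hx => exact subset_span ⟨x, hx, rfl⟩
    | zero => simp
    | add x y _ _ hx hy => rw [map_add]; exact add_mem hx hy
    | smul a x _ hx =>
      obtain ⟨c, rfl⟩ := hρ a
      rw [← hf]
      exact smul_mem _ c hx

theorem card_span_image (ρ : R' →+* R) (hρ : Function.Surjective ρ) (f : M →+ M')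
    (hf : ∀ (c : R') (x : M), c • f x = f (ρ c • x)) (hinj : Function.Injective f) (s : Set M) :
    Nat.card (span R' (f '' s)) = Nat.card (span R s) := by
  rw [← SetLike.coe_sort_coe, span_image_eq_image_span ρ hρ f hf, Nat.card_image_of_injective hinj]
  rfl

theorem card_span_pair_map (e : M ≃ₗ[R] M) (u v : M) :
    Nat.card (span R {e u, e v}) = Nat.card (span R {u, v}) := by
  rw [← Set.image_pair]
  exact card_span_image (RingHom.id R) Function.surjective_id (e : M →+ M)
    (fun c x => (map_smul e c x).symm) e.injective _

end SpanImage

theorem sum_apply_one {α : Type*} [Fintype α] (g : α → ℕ) :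
    ∑ v : Fin 2 → α, g (v 1) = Nat.card α * ∑ t, g t := by
  rw [Fintype.sum_equiv (piFinTwoEquiv fun _ => α) (fun v => g (v 1)) (fun p => g p.2)
    fun _ => rfl, Fintype.sum_prod_type]
  simp [Nat.card_eq_fintype_card]

section RowSpaces

variable {R : Type*} [CommRing R]

theorem card_span_single_zero_pair [Finite R] (v : Fin 2 → R) :
    Nat.card (span R {Pi.single 0 1, v}) = Nat.card R * Nat.card (Ideal.span {v 1}) := by
  have hmem : ∀ w : Fin 2 → R, w ∈ span R {Pi.single 0 1, v} ↔ w 1 ∈ Ideal.span {v 1} := by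
    intro w
    rw [mem_span_pair, Ideal.mem_span_singleton]
    constructor
    · rintro ⟨a, b, rfl⟩
      exact ⟨b, by simp [mul_comm]⟩
    · rintro ⟨c, hc⟩
      refine ⟨w 0 - c * v 0, c, funext fun i => ?_⟩
      fin_cases i <;> simp [hc, mul_comm]
  rw [← Nat.card_prod]
  refine Nat.card_congr
    { toFun := fun w => (w.1 0, ⟨w.1 1, (hmem w).1 w.2⟩)
      invFun := fun p => ⟨![p.1, p.2.1], (hmem _).2 p.2.2⟩
      left_inv := fun w => Subtype.ext (funext fun i => by fin_cases i <;> rfl)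
      right_inv := fun p => rfl }

theorem exists_linearEquiv_apply_single_zero (u : Fin 2 → R) (hu : IsUnit (u 0) ∨ IsUnit (u 1)) :
    ∃ e : (Fin 2 → R) ≃ₗ[R] (Fin 2 → R), e (Pi.single 0 1) = u := by
  obtain ⟨M, hM0, hdet⟩ : ∃ M : Matrix (Fin 2) (Fin 2) R, M 0 = u ∧ IsUnit M.det := by
    rcases hu with h | h
    · exact ⟨!![u 0, u 1; 0, 1], funext fun i => by fin_cases i <;> rfl, by simpa using h⟩
    · exact ⟨!![u 0, u 1; 1, 0], funext fun i => by fin_cases i <;> rfl, by simpa using h.neg⟩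
  have hM : IsUnit M := (isUnit_iff_isUnit_det M).2 hdet
  have hbij : Function.Bijective M.vecMulLinear := by
    rw [coe_vecMulLinear]
    exact ⟨vecMul_injective_of_isUnit hM, vecMul_surjective_iff_isUnit.2 hM⟩
  refine ⟨.ofBijective _ hbij, ?_⟩
  simp only [LinearEquiv.ofBijective_apply, vecMulLinear_apply, single_one_vecMul]
  exact hM0

theorem LinearMap.apply_mem_of_forall_mem {ι κ : Type*} [Fintype ι] [DecidableEq ι]
    (f : (ι → R) →ₗ[R] (κ → R)) (I : Ideal R) {u : ι → R} (hu : ∀ i, u i ∈ I) (k : κ) :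
    f u k ∈ I := by
  rw [LinearMap.pi_apply_eq_sum_univ f u, Finset.sum_apply]
  exact I.sum_mem fun i _ => I.mul_mem_right _ (hu i)

theorem exists_vecMul_eq_iff_mem_span_pair (u v w : Fin 2 → R) :
    (∃ x, x ᵥ* of ![u, v] = w) ↔ w ∈ span R {u, v} := by
  rw [mem_span_pair]
  constructor
  · rintro ⟨x, rfl⟩
    exact ⟨x 0, x 1, funext fun k => by simp [vecMul, dotProduct, Fin.sum_univ_two]⟩
  · rintro ⟨a, b, rfl⟩
    exact ⟨![a, b], funext fun k => by simp [vecMul, dotProduct, Fin.sum_univ_two]⟩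

variable [Fintype R]

noncomputable def spanSingletonSum (R : Type*) [CommRing R] [Fintype R] : ℕ :=
  ∑ t : R, Nat.card (Ideal.span {t})

noncomputable def spanPairSum (R : Type*) [CommRing R] [Fintype R] : ℕ :=
  ∑ u : Fin 2 → R, ∑ v : Fin 2 → R, Nat.card (span R {u, v})

open Classical in
theorem sum_forall_mem_apply_one (I : Ideal R) (g : R → ℕ) :
    ∑ u : {u : Fin 2 → R // ∀ i, u i ∈ I}, g (u.1 1) = Nat.card I * ∑ t : I, g t := by
  rw [Fintype.sum_equiv (Equiv.subtypePiEquivPi.trans (piFinTwoEquiv fun _ => I))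
    (fun u => g (u.1 1)) (fun p => g p.2) fun _ => rfl, Fintype.sum_prod_type]
  simp [Nat.card_eq_fintype_card]

theorem spanSingletonSum_of_subsingleton [Subsingleton R] : spanSingletonSum R = 1 := by
  simp only [spanSingletonSum, Nat.card_unique, Finset.sum_const, Finset.card_univ, smul_eq_mul,
    mul_one]
  exact Fintype.card_eq_one_iff.2 ⟨0, fun _ => Subsingleton.elim _ _⟩

theorem spanPairSum_of_subsingleton [Subsingleton R] : spanPairSum R = 1 := by
  have h : Fintype.card (Fin 2 → R) = 1 :=
    Fintype.card_eq_one_iff.2 ⟨0, fun _ => Subsingleton.elim _ _⟩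
  simp only [spanPairSum, Nat.card_unique, Finset.sum_const, Finset.card_univ, smul_eq_mul,
    mul_one, h]

open Classical in
theorem card_not_mem (I : Ideal R) : Nat.card {t // t ∉ I} = Nat.card R - Nat.card I := by
  simp only [Nat.card_eq_fintype_card, Fintype.card_subtype_compl]

open Classical in
theorem card_not_forall_mem (I : Ideal R) :
    Nat.card {u : Fin 2 → R // ¬ ∀ i, u i ∈ I} =
      Nat.card R * Nat.card R - Nat.card I * Nat.card I := by
  have hI : Nat.card {u : Fin 2 → R // ∀ i, u i ∈ I} = Nat.card I * Nat.card I := by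
    rw [Nat.card_congr Equiv.subtypePiEquivPi, Nat.card_pi, Fin.prod_univ_two]
  have hR : Nat.card (Fin 2 → R) = Nat.card R * Nat.card R := by
    rw [Nat.card_pi, Fin.prod_univ_two]
  rw [← hI, ← hR]
  simp only [Nat.card_eq_fintype_card, Fintype.card_subtype_compl]

end RowSpaces

section LocalRing

variable {R : Type*} [CommRing R] [IsLocalRing R]

theorem isUnit_or_isUnit_of_not_forall_mem {u : Fin 2 → R} (hu : ¬ ∀ i, u i ∈ maximalIdeal R) :
    IsUnit (u 0) ∨ IsUnit (u 1) := by
  simpa [Fin.forall_fin_two, or_iff_not_imp_left] using hu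

variable [Fintype R]

theorem sum_card_span_pair_of_not_forall_mem {u : Fin 2 → R} (hu : ¬ ∀ i, u i ∈ maximalIdeal R) :
    ∑ v, Nat.card (span R {u, v}) = Nat.card R * Nat.card R * spanSingletonSum R := by
  obtain ⟨e, rfl⟩ := exists_linearEquiv_apply_single_zero u (isUnit_or_isUnit_of_not_forall_mem hu)
  calc ∑ v, Nat.card (span R {e (Pi.single 0 1), v})
      = ∑ v, Nat.card (span R {e (Pi.single 0 1), e v}) := (e.toEquiv.sum_comp _).symm
    _ = ∑ v : Fin 2 → R, Nat.card R * Nat.card (Ideal.span {v 1}) := by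
      simp_rw [card_span_pair_map, card_span_single_zero_pair]
    _ = Nat.card R * Nat.card R * spanSingletonSum R := by
      rw [← Finset.mul_sum, sum_apply_one fun t => Nat.card (Ideal.span {t}), spanSingletonSum,
        mul_assoc]

open Classical in
theorem sum_card_span_pair_forall_mem_of_not_forall_mem {v : Fin 2 → R}
    (hv : ¬ ∀ i, v i ∈ maximalIdeal R) :
    ∑ u : {u : Fin 2 → R // ∀ i, u i ∈ maximalIdeal R}, Nat.card (span R {u.1, v}) =
      Nat.card R * Nat.card (maximalIdeal R) *
        ∑ t : maximalIdeal R, Nat.card (Ideal.span {(t : R)}) := by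
  obtain ⟨e, rfl⟩ := exists_linearEquiv_apply_single_zero v (isUnit_or_isUnit_of_not_forall_mem hv)
  have hmem : ∀ u, (∀ i, u i ∈ maximalIdeal R) ↔ ∀ i, e.symm u i ∈ maximalIdeal R := fun u =>
    ⟨fun h => e.symm.toLinearMap.apply_mem_of_forall_mem _ h,
      fun h => by simpa using e.toLinearMap.apply_mem_of_forall_mem _ h⟩
  calc
    _ = ∑ u : {u : Fin 2 → R // ∀ i, u i ∈ maximalIdeal R},
          Nat.card (span R {Pi.single 0 1, e.symm u}) := by
      refine Fintype.sum_congr _ _ fun u => ?_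
      rw [Set.pair_comm, ← card_span_pair_map e.symm, e.symm_apply_apply]
    _ = ∑ u : {u : Fin 2 → R // ∀ i, u i ∈ maximalIdeal R},
          Nat.card (span R {Pi.single 0 1, u.1}) :=
      Fintype.sum_equiv (e.symm.toEquiv.subtypeEquiv hmem) _ _ fun _ => rfl
    _ = _ := by
      simp_rw [card_span_single_zero_pair]
      rw [← Finset.mul_sum, sum_forall_mem_apply_one _ (fun t => Nat.card (Ideal.span {t})),
        mul_assoc]

open Classical in
theorem spanSingletonSum_eq_of_isLocalRing :
    spanSingletonSum R = Nat.card {t // t ∉ maximalIdeal R} * Nat.card R +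
      ∑ t : maximalIdeal R, Nat.card (Ideal.span {(t : R)}) := by
  have hunit : ∀ t : {t // t ∉ maximalIdeal R}, Nat.card (Ideal.span {t.1}) = Nat.card R :=
    fun t => by
      rw [Ideal.span_singleton_eq_top.2 (by simpa using t.2)]
      exact Nat.card_congr Submodule.topEquiv.toEquiv
  rw [spanSingletonSum, ← Fintype.sum_subtype_add_sum_subtype (· ∈ maximalIdeal R), add_comm,
    Fintype.sum_congr _ _ hunit, Finset.sum_const, Finset.card_univ, smul_eq_mul,
    Fintype.card_eq_nat_card]

open Classical in
theorem spanPairSum_eq_of_isLocalRing :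
    spanPairSum R =
      Nat.card {u : Fin 2 → R // ¬ ∀ i, u i ∈ maximalIdeal R} *
          (Nat.card R * Nat.card R * spanSingletonSum R +
            Nat.card R * Nat.card (maximalIdeal R) *
              ∑ t : maximalIdeal R, Nat.card (Ideal.span {(t : R)})) +
        ∑ u : {u : Fin 2 → R // ∀ i, u i ∈ maximalIdeal R},
          ∑ v : {v : Fin 2 → R // ∀ i, v i ∈ maximalIdeal R}, Nat.card (span R {u.1, v.1}) := by
  set p : (Fin 2 → R) → Prop := fun u => ∀ i, u i ∈ maximalIdeal R
  have hunimodular : ∑ u : {u // ¬ p u}, ∑ v, Nat.card (span R {u.1, v}) =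
      Nat.card {u // ¬ p u} * (Nat.card R * Nat.card R * spanSingletonSum R) := by
    rw [Fintype.sum_congr _ _ fun u => sum_card_span_pair_of_not_forall_mem u.2, Finset.sum_const,
      Finset.card_univ, smul_eq_mul, Fintype.card_eq_nat_card]
  have hsecond : ∑ u : {u // p u}, ∑ v : {v // ¬ p v}, Nat.card (span R {u.1, v.1}) =
      Nat.card {u // ¬ p u} * (Nat.card R * Nat.card (maximalIdeal R) *
        ∑ t : maximalIdeal R, Nat.card (Ideal.span {(t : R)})) := by
    rw [Finset.sum_comm,
      Fintype.sum_congr _ _ fun v => sum_card_span_pair_forall_mem_of_not_forall_mem v.2,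
      Finset.sum_const, Finset.card_univ, smul_eq_mul, Fintype.card_eq_nat_card]
  rw [spanPairSum, ← Fintype.sum_subtype_add_sum_subtype p, hunimodular]
  simp_rw [← Fintype.sum_subtype_add_sum_subtype p (fun v => Nat.card (span R {_, v}))]
  rw [Finset.sum_add_distrib, hsecond]
  ring

end LocalRing

section ZModPow

variable {ℓ : ℕ} [NeZero ℓ]

noncomputable def scalePowEquiv (r j : ℕ) :
    ZMod (ℓ ^ j) ≃ {y : ZMod (ℓ ^ (r + j)) //
      ZMod.castHom (pow_dvd_pow ℓ (Nat.le_add_right r j)) (ZMod (ℓ ^ r)) y = 0} :=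
  .ofBijective (fun a => ⟨scalePow ℓ r j a, castHom_scalePow a⟩)
    ⟨fun _ _ h => scalePow_injective (congrArg Subtype.val h),
      fun y => ((exists_scalePow_eq_iff y.1).2 y.2).imp fun _ => Subtype.ext⟩

theorem card_span_scalePow_pair {r j : ℕ} {ι : Type*} (u v : ι → ZMod (ℓ ^ j)) :
    Nat.card (span (ZMod (ℓ ^ (r + j))) {scalePow ℓ r j ∘ u, scalePow ℓ r j ∘ v}) =
      Nat.card (span (ZMod (ℓ ^ j)) {u, v}) := by
  rw [← Set.image_pair]
  exact card_span_image (ZMod.castHom (pow_dvd_pow ℓ (Nat.le_add_left j r)) (ZMod (ℓ ^ j)))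
    (ZMod.ringHom_surjective _) ((scalePow ℓ r j).compLeft ι)
    (fun c x => funext fun i => by exact mul_scalePow c (x i)) scalePow_injective.comp_left _

theorem card_span_scalePow {r j : ℕ} (t : ZMod (ℓ ^ j)) :
    Nat.card (Ideal.span {scalePow ℓ r j t}) = Nat.card (Ideal.span {t}) := by
  rw [← Set.image_singleton]
  exact card_span_image (ZMod.castHom (pow_dvd_pow ℓ (Nat.le_add_left j r)) (ZMod (ℓ ^ j)))
    (ZMod.ringHom_surjective _) (scalePow ℓ r j) mul_scalePow scalePow_injective _

theorem liftCount_zero_one_eq_spanPairSum (r j : ℕ) :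
    liftCount ℓ r (r + j) (Nat.le_add_right r j) 0 1 = spanPairSum (ZMod (ℓ ^ j)) := by
  rw [liftCount]
  set π := ZMod.castHom (pow_dvd_pow ℓ (Nat.le_add_right r j)) (ZMod (ℓ ^ r))
  set φ := scalePow ℓ r j
  have hφ : ∀ a, π (φ a) = 0 := castHom_scalePow
  have hsum : spanPairSum (ZMod (ℓ ^ j)) = ∑ q : (Fin 2 → ZMod (ℓ ^ j)) × (Fin 2 → ZMod (ℓ ^ j)),
      Nat.card (span (ZMod (ℓ ^ (r + j))) {φ ∘ q.1, φ ∘ q.2}) := by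
    simp only [spanPairSum, card_span_scalePow_pair, φ, Fintype.sum_prod_type]
  rw [hsum, ← Nat.card_sigma]
  symm
  refine Nat.card_eq_of_bijective
    (fun s => ⟨(s.2.1, 1 + of ![φ ∘ s.1.1, φ ∘ s.1.2]), ?_, ?_, ?_⟩) ⟨?_, ?_⟩
  · obtain ⟨c, d, hw⟩ := mem_span_pair.1 s.2.2
    intro i
    simp only [← hw, Pi.add_apply, Pi.smul_apply, Function.comp_apply, smul_eq_mul, map_add,
      map_mul, hφ, mul_zero, add_zero, Pi.zero_apply]
  · rw [Matrix.map_add _ (map_add π), Matrix.map_one _ (map_zero π) (map_one π), add_eq_left]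
    ext i k
    fin_cases i <;> exact hφ _
  · rw [add_sub_cancel_left]
    exact (exists_vecMul_eq_iff_mem_span_pair _ _ _).2 s.2.2
  · rintro ⟨⟨a, b⟩, w, hw⟩ ⟨⟨a', b'⟩, w', hw'⟩ h
    simp only [Subtype.mk.injEq, Prod.mk.injEq] at h
    obtain ⟨rfl, hN⟩ := h
    have hrows := add_left_cancel hN
    have ha : a = a' := scalePow_injective.comp_left (congrFun hrows 0)
    have hb : b = b' := scalePow_injective.comp_left (congrFun hrows 1)
    subst ha hb
    rfl
  · rintro ⟨⟨w, M⟩, -, hM, x, hx⟩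
    have hM1 : (M - 1).map π = 0 := by
      rw [Matrix.map_sub _ (map_sub π), hM, Matrix.map_one _ (map_zero π) (map_one π), sub_self]
    have hentries : ∀ i k, ∃ a, φ a = (M - 1) i k := fun i k =>
      (exists_scalePow_eq_iff _).2 (congrFun (congrFun hM1 i) k)
    choose a ha using hentries
    have hN : of ![φ ∘ a 0, φ ∘ a 1] = M - 1 := by
      ext i k
      fin_cases i <;> exact ha _ _
    refine ⟨⟨(a 0, a 1), w, ?_⟩, ?_⟩
    · rw [← exists_vecMul_eq_iff_mem_span_pair, hN]
      exact ⟨x, hx⟩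
    · exact Subtype.ext (Prod.ext rfl (by simp [hN]))

end ZModPow

section PrimePow

variable {ℓ : ℕ} [Fact ℓ.Prime]

theorem not_isUnit_iff_castHom_eq_zero {j : ℕ} (y : ZMod (ℓ ^ (1 + j))) :
    ¬ IsUnit y ↔ ZMod.castHom (pow_dvd_pow ℓ (Nat.le_add_right 1 j)) (ZMod (ℓ ^ 1)) y = 0 := by
  have hℓ : ℓ.Prime := Fact.out
  rw [← ZMod.natCast_zmod_val y, ZMod.isUnit_iff_coprime, map_natCast, ZMod.natCast_eq_zero_iff,
    pow_one, Nat.coprime_pow_right_iff (by omega), Nat.coprime_comm, hℓ.coprime_iff_not_dvd,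
    not_not]

instance (j : ℕ) : IsLocalRing (ZMod (ℓ ^ (1 + j))) :=
  have : Nontrivial (ZMod (ℓ ^ (1 + j))) :=
    ZMod.nontrivial_iff.2 (Nat.one_lt_pow (by omega) (Fact.out : ℓ.Prime).one_lt).ne'
  .of_nonunits_add fun a b ha hb => by
    rw [mem_nonunits_iff, not_isUnit_iff_castHom_eq_zero] at ha hb ⊢
    rw [map_add, ha, hb, add_zero]

noncomputable def zmodPowEquivMaximalIdeal (j : ℕ) :
    ZMod (ℓ ^ j) ≃ maximalIdeal (ZMod (ℓ ^ (1 + j))) :=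
  (scalePowEquiv 1 j).trans <| Equiv.subtypeEquivRight fun y => by
    rw [mem_maximalIdeal, mem_nonunits_iff, not_isUnit_iff_castHom_eq_zero]

theorem card_maximalIdeal (j : ℕ) : Nat.card (maximalIdeal (ZMod (ℓ ^ (1 + j)))) = ℓ ^ j := by
  rw [← Nat.card_congr (zmodPowEquivMaximalIdeal j), Nat.card_zmod]

open Classical in
theorem sum_card_span_maximalIdeal (j : ℕ) :
    ∑ t : maximalIdeal (ZMod (ℓ ^ (1 + j))), Nat.card (Ideal.span {(t : ZMod (ℓ ^ (1 + j)))}) =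
      spanSingletonSum (ZMod (ℓ ^ j)) :=
  (Fintype.sum_equiv (zmodPowEquivMaximalIdeal j) _ _ fun t =>
    (card_span_scalePow (r := 1) t).symm).symm

open Classical in
theorem sum_card_span_pair_maximalIdeal (j : ℕ) :
    ∑ u : {u : Fin 2 → ZMod (ℓ ^ (1 + j)) // ∀ i, u i ∈ maximalIdeal _},
      ∑ v : {v : Fin 2 → ZMod (ℓ ^ (1 + j)) // ∀ i, v i ∈ maximalIdeal _},
        Nat.card (span (ZMod (ℓ ^ (1 + j))) {u.1, v.1}) = spanPairSum (ZMod (ℓ ^ j)) := by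
  let e : (Fin 2 → ZMod (ℓ ^ j)) ≃ {u : Fin 2 → ZMod (ℓ ^ (1 + j)) // ∀ i, u i ∈ maximalIdeal _} :=
    (Equiv.piCongrRight fun _ => zmodPowEquivMaximalIdeal j).trans Equiv.subtypePiEquivPi.symm
  rw [spanPairSum, ← e.sum_comp]
  refine Fintype.sum_congr _ _ fun u => ?_
  rw [← e.sum_comp]
  exact Fintype.sum_congr _ _ fun v => card_span_scalePow_pair u v

theorem spanSingletonSum_zmod_pow_one_add (j : ℕ) :
    spanSingletonSum (ZMod (ℓ ^ (1 + j))) =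
      (ℓ ^ (1 + j) - ℓ ^ j) * ℓ ^ (1 + j) + spanSingletonSum (ZMod (ℓ ^ j)) := by
  rw [spanSingletonSum_eq_of_isLocalRing, card_not_mem, card_maximalIdeal, Nat.card_zmod,
    sum_card_span_maximalIdeal]

theorem spanPairSum_zmod_pow_one_add (j : ℕ) :
    spanPairSum (ZMod (ℓ ^ (1 + j))) =
      (ℓ ^ (1 + j) * ℓ ^ (1 + j) - ℓ ^ j * ℓ ^ j) *
          (ℓ ^ (1 + j) * ℓ ^ (1 + j) * spanSingletonSum (ZMod (ℓ ^ (1 + j))) +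
            ℓ ^ (1 + j) * ℓ ^ j * spanSingletonSum (ZMod (ℓ ^ j))) +
        spanPairSum (ZMod (ℓ ^ j)) := by
  rw [spanPairSum_eq_of_isLocalRing, card_not_forall_mem, card_maximalIdeal, Nat.card_zmod,
    sum_card_span_maximalIdeal, sum_card_span_pair_maximalIdeal]

theorem cast_spanSingletonSum_zmod_pow (j : ℕ) :
    (spanSingletonSum (ZMod (ℓ ^ j)) : ℝ) = ((ℓ : ℝ) ^ (2 * j + 1) + 1) / (ℓ + 1) := by
  have hℓ : ℓ.Prime := Fact.out
  induction j with
  | zero =>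
    have : Subsingleton (ZMod (ℓ ^ 0)) := by rw [pow_zero]; infer_instance
    rw [spanSingletonSum_of_subsingleton]
    field_simp
    norm_num
  | succ j ih =>
    rw [add_comm j 1, spanSingletonSum_zmod_pow_one_add, Nat.cast_add, Nat.cast_mul,
      Nat.cast_sub (Nat.pow_le_pow_right hℓ.pos (by omega)), ih]
    push_cast
    field_simp
    ring

theorem cast_spanPairSum_zmod_pow (j : ℕ) :
    (spanPairSum (ZMod (ℓ ^ j)) : ℝ) =
      (ℓ : ℝ) ^ 2 * ((ℓ : ℝ) ^ (6 * j) - 1) / ((ℓ : ℝ) ^ 2 + ℓ + 1) +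
        ℓ * ((ℓ : ℝ) ^ (4 * j) - 1) / ((ℓ : ℝ) ^ 2 + 1) + 1 := by
  have hℓ : ℓ.Prime := Fact.out
  induction j with
  | zero =>
    have : Subsingleton (ZMod (ℓ ^ 0)) := by rw [pow_zero]; infer_instance
    rw [spanPairSum_of_subsingleton]
    norm_num
  | succ j ih =>
    have hle : ℓ ^ j ≤ ℓ ^ (1 + j) := Nat.pow_le_pow_right hℓ.pos (by omega)
    rw [add_comm j 1, spanPairSum_zmod_pow_one_add, Nat.cast_add, Nat.cast_mul,
      Nat.cast_sub (Nat.mul_le_mul hle hle), ih]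
    push_cast [cast_spanSingletonSum_zmod_pow]
    field_simp
    ring

end PrimePow

theorem stmt_8_general (ℓ : ℕ) (hℓ : ℓ.Prime) (r : ℕ) :
    Tendsto
      (fun j : ℕ =>
        (liftCount ℓ r (r + j) (Nat.le_add_right r j)
          (0 : Fin 2 → ZMod (ℓ ^ r)) (1 : Matrix (Fin 2) (Fin 2) (ZMod (ℓ ^ r))) : ℝ)
          / (ℓ : ℝ) ^ (6 * j))
      atTop (𝓝 ((ℓ : ℝ) ^ 2 / ((ℓ : ℝ) ^ 2 + (ℓ : ℝ) + 1))) := by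
  have := Fact.mk hℓ
  have hℓ1 : (1 : ℝ) < ℓ := by exact_mod_cast hℓ.one_lt
  have hinv : ∀ n, 0 < n → Tendsto (fun j : ℕ => ((ℓ : ℝ) ^ (n * j))⁻¹) atTop (𝓝 0) :=
    fun n hn => by
      simp_rw [pow_mul]
      exact tendsto_inv_atTop_zero.comp (tendsto_pow_atTop_atTop_of_one_lt (one_lt_pow₀ hℓ1 hn.ne'))
  have hform : ∀ j : ℕ, (liftCount ℓ r (r + j) (Nat.le_add_right r j) 0 1 : ℝ) / (ℓ : ℝ) ^ (6 * j) =
      (ℓ : ℝ) ^ 2 / ((ℓ : ℝ) ^ 2 + ℓ + 1) * (1 - ((ℓ : ℝ) ^ (6 * j))⁻¹) +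
        ℓ / ((ℓ : ℝ) ^ 2 + 1) * (((ℓ : ℝ) ^ (2 * j))⁻¹ - ((ℓ : ℝ) ^ (6 * j))⁻¹) +
          ((ℓ : ℝ) ^ (6 * j))⁻¹ := fun j => by
    rw [liftCount_zero_one_eq_spanPairSum, cast_spanPairSum_zmod_pow]
    field_simp
    ring
  simp_rw [hform]
  convert (((hinv 6 (by norm_num)).const_sub 1).const_mul _).add
    (((hinv 2 (by norm_num)).sub (hinv 6 (by norm_num))).const_mul _) |>.add (hinv 6 (by norm_num))
    using 2
  simp

/-- For `v₀ = 0` and `M₀ = I` over `ℤ/ℓ^rℤ`, the sequence `N_k(0, I)/ℓ^(6(k-r))`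
converges (as `k = r + j → ∞`) to `ℓ²/(ℓ² + ℓ + 1)`. -/
theorem stmt_8 (ℓ : ℕ) (hℓ : ℓ.Prime) (r : ℕ) (hr : 1 ≤ r) :
    Tendsto
      (fun j : ℕ =>
        (liftCount ℓ r (r + j) (Nat.le_add_right r j)
          (0 : Fin 2 → ZMod (ℓ ^ r)) (1 : Matrix (Fin 2) (Fin 2) (ZMod (ℓ ^ r))) : ℝ)
          / (ℓ : ℝ) ^ (6 * j))
      atTop (𝓝 ((ℓ : ℝ) ^ 2 / ((ℓ : ℝ) ^ 2 + (ℓ : ℝ) + 1))) :=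
  stmt_8_general ℓ hℓ r
end

section
/- Let ℓ be a prime, r ≥ 1 an integer, and M₀ ∈ M₂(ℤ/ℓ^rℤ) a matrix with det(M₀ − I) = 0 in ℤ/ℓ^rℤ and such that the reduction of M₀ modulo ℓ is not the identity matrix. Then among the ℓ⁴ matrices M ∈ M₂(ℤ/ℓ^{r+1}ℤ) whose reduction mod ℓ^r equals M₀, exactly ℓ³ satisfy det(M − I) = 0 in ℤ/ℓ^{r+1}ℤ. -/
namespace Stmt9Aux

open Matrix

theorem fiber_card_mul {A B : Type*} [AddCommGroup A] [AddCommGroup B] [Finite A]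
    (f : A →+ B) (a₀ : A) :
    Nat.card {a // f a = f a₀} * Nat.card f.range = Nat.card A := by
  have e : {a // f a = f a₀} ≃ f.ker :=
    { toFun := fun x => ⟨x.1 - a₀, by
        have := x.2
        simp [AddMonoidHom.mem_ker, map_sub, this]⟩
      invFun := fun x => ⟨x.1 + a₀, by
        have hx : f x.1 = 0 := x.2
        simp [map_add, hx]⟩
      left_inv := fun x => by ext; simp
      right_inv := fun x => by ext; simp }
  rw [Nat.card_congr e]
  have h1 := AddSubgroup.card_eq_card_quotient_mul_card_addSubgroup f.ker
  have h2 : Nat.card (A ⧸ f.ker) = Nat.card f.range :=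
    Nat.card_congr (QuotientAddGroup.quotientKerEquivRange f).toEquiv
  rw [h1, h2]; ring

variable {ℓ r : ℕ}

noncomputable def μ (ℓ r : ℕ) : ZMod ℓ →+ ZMod (ℓ ^ (r + 1)) :=
  ZMod.lift ℓ ⟨zmultiplesHom _ ((ℓ ^ r : ℕ) : ZMod (ℓ ^ (r + 1))), by
    show (ℓ : ℤ) • ((ℓ ^ r : ℕ) : ZMod (ℓ ^ (r + 1))) = 0
    rw [natCast_zsmul, nsmul_eq_mul, ← Nat.cast_mul, ← pow_succ', ZMod.natCast_self]⟩

theorem μ_natCast (ℓ r : ℕ) (k : ℕ) :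
    μ ℓ r ((k : ℕ) : ZMod ℓ) = ((ℓ ^ r : ℕ) : ZMod (ℓ ^ (r + 1))) * k := by
  have : ((k : ℕ) : ZMod ℓ) = ((k : ℤ) : ZMod ℓ) := by push_cast; ring
  rw [this, μ, ZMod.lift_coe]
  show (k : ℤ) • ((ℓ ^ r : ℕ) : ZMod (ℓ ^ (r + 1))) = _
  rw [natCast_zsmul, nsmul_eq_mul, mul_comm]

theorem card_matrix (k : ℕ) : Nat.card (Matrix (Fin 2) (Fin 2) (ZMod k)) = k ^ 4 := by
  rw [Nat.card_congr (Matrix.of.symm : Matrix (Fin 2) (Fin 2) (ZMod k) ≃ _),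
    Nat.card_fun, Nat.card_fun, Nat.card_zmod]
  simp [Nat.card_eq_fintype_card]
  ring

variable (hℓ : ℓ.Prime)
include hℓ

theorem μ_inj : Function.Injective (μ ℓ r) := by
  haveI : NeZero ℓ := ⟨hℓ.ne_zero⟩
  haveI : NeZero (ℓ ^ (r + 1)) := ⟨pow_ne_zero _ hℓ.ne_zero⟩
  rw [injective_iff_map_eq_zero]
  intro t ht
  rw [← ZMod.natCast_rightInverse t, μ_natCast, ← Nat.cast_mul,
    ZMod.natCast_eq_zero_iff] at ht
  rw [pow_succ'] at ht
  have h2 : ℓ ∣ t.val := by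
    rcases ht with ⟨c, hc⟩
    refine ⟨c, ?_⟩
    have := pow_ne_zero r hℓ.ne_zero
    rw [mul_comm ℓ (ℓ ^ r), mul_assoc] at hc
    exact Nat.eq_of_mul_eq_mul_left (Nat.pos_of_ne_zero this) hc
  have h3 : t.val < ℓ := ZMod.val_lt t
  rcases h2 with ⟨c, hc⟩
  have hc0 : c = 0 := by
    by_contra hc0
    have := Nat.le_mul_of_pos_right ℓ (Nat.pos_of_ne_zero hc0)
    omega
  subst hc0
  exact (ZMod.val_eq_zero t).mp (by omega)

theorem ker_iff (x : ZMod (ℓ ^ (r + 1))) :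
    ZMod.castHom (pow_dvd_pow ℓ (Nat.le_succ r)) (ZMod (ℓ ^ r)) x = 0 ↔
      ∃ t : ZMod ℓ, μ ℓ r t = x := by
  haveI : NeZero ℓ := ⟨hℓ.ne_zero⟩
  haveI : NeZero (ℓ ^ (r + 1)) := ⟨pow_ne_zero _ hℓ.ne_zero⟩
  haveI : NeZero (ℓ ^ r) := ⟨pow_ne_zero _ hℓ.ne_zero⟩
  constructor
  · intro h
    rw [ZMod.castHom_apply, ← ZMod.natCast_val,
      ZMod.natCast_eq_zero_iff] at h
    rcases h with ⟨c, hc⟩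
    refine ⟨((c : ℕ) : ZMod ℓ), ?_⟩
    rw [μ_natCast, ← Nat.cast_mul, ← hc, ZMod.natCast_rightInverse x]
  · rintro ⟨t, rfl⟩
    rw [← ZMod.natCast_rightInverse t, μ_natCast, _root_.map_mul, map_natCast,
      map_natCast, ZMod.natCast_self, zero_mul]

theorem mul_ker_eq_zero {x y : ZMod (ℓ ^ (r + 1))}
    (hx : ZMod.castHom (pow_dvd_pow ℓ (Nat.le_succ r)) (ZMod (ℓ ^ r)) x = 0)
    (hy : ZMod.castHom (pow_dvd_pow ℓ (Nat.le_succ r)) (ZMod (ℓ ^ r)) y = 0)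
    (hr : 1 ≤ r) : x * y = 0 := by
  haveI : NeZero ℓ := ⟨hℓ.ne_zero⟩
  haveI : NeZero (ℓ ^ (r + 1)) := ⟨pow_ne_zero _ hℓ.ne_zero⟩
  rw [ker_iff hℓ] at hx hy
  obtain ⟨s, rfl⟩ := hx
  obtain ⟨u, rfl⟩ := hy
  rw [← ZMod.natCast_rightInverse s, ← ZMod.natCast_rightInverse u,
    μ_natCast, μ_natCast]
  have h0 : ((ℓ ^ r : ℕ) : ZMod (ℓ ^ (r + 1))) * ((ℓ ^ r : ℕ) : ZMod (ℓ ^ (r + 1))) = 0 := by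
    rw [← Nat.cast_mul, ZMod.natCast_eq_zero_iff, ← pow_add]
    exact pow_dvd_pow ℓ (by omega)
  calc ((ℓ ^ r : ℕ) : ZMod (ℓ ^ (r + 1))) * (s.val : ZMod (ℓ^(r+1))) *
      (((ℓ ^ r : ℕ) : ZMod (ℓ ^ (r + 1))) * (u.val : ZMod (ℓ^(r+1))))
      = ((ℓ ^ r : ℕ) : ZMod (ℓ ^ (r + 1))) * ((ℓ ^ r : ℕ) : ZMod (ℓ ^ (r + 1))) *
        ((s.val : ZMod (ℓ^(r+1))) * (u.val : ZMod (ℓ^(r+1)))) := by ring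
    _ = 0 := by rw [h0, zero_mul]

theorem mul_μ (x : ZMod (ℓ ^ (r + 1))) (t : ZMod ℓ) :
    x * μ ℓ r t = μ ℓ r ((x.val : ZMod ℓ) * t) := by
  haveI : NeZero ℓ := ⟨hℓ.ne_zero⟩
  haveI : NeZero (ℓ ^ (r + 1)) := ⟨pow_ne_zero _ hℓ.ne_zero⟩
  conv_lhs => rw [← ZMod.natCast_rightInverse t, ← ZMod.natCast_rightInverse x]
  conv_rhs => rw [← ZMod.natCast_rightInverse t]
  rw [← Nat.cast_mul, μ_natCast, μ_natCast, Nat.cast_mul]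
  ring

end Stmt9Aux

open Stmt9Aux

/-- Let `M₀ ∈ M₂(ℤ/ℓ^rℤ)` with `det(M₀ - I) = 0` and `M₀` not reducing to the identity
mod `ℓ`.  Among the `ℓ⁴` matrices `M ∈ M₂(ℤ/ℓ^(r+1)ℤ)` reducing to `M₀` mod `ℓ^r`,
exactly `ℓ³` satisfy `det(M - I) = 0` in `ℤ/ℓ^(r+1)ℤ`. -/
theorem stmt_9 (ℓ r : ℕ) (hℓ : ℓ.Prime) (hr : 1 ≤ r)
    (M₀ : Matrix (Fin 2) (Fin 2) (ZMod (ℓ ^ r)))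
    (hdet : (M₀ - 1).det = 0)
    (hnotI : M₀.map (ZMod.castHom (dvd_pow_self ℓ (by omega : r ≠ 0)) (ZMod ℓ)) ≠ 1) :
    Nat.card {M : Matrix (Fin 2) (Fin 2) (ZMod (ℓ ^ (r + 1))) //
        M.map (ZMod.castHom (pow_dvd_pow ℓ (Nat.le_succ r)) (ZMod (ℓ ^ r))) = M₀} = ℓ ^ 4 ∧
    Nat.card {M : Matrix (Fin 2) (Fin 2) (ZMod (ℓ ^ (r + 1))) //
        M.map (ZMod.castHom (pow_dvd_pow ℓ (Nat.le_succ r)) (ZMod (ℓ ^ r))) = M₀ ∧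
        (M - 1).det = 0} = ℓ ^ 3 := by
  haveI : Fact ℓ.Prime := ⟨hℓ⟩
  haveI : NeZero ℓ := ⟨hℓ.ne_zero⟩
  haveI : NeZero (ℓ ^ (r + 1)) := ⟨pow_ne_zero _ hℓ.ne_zero⟩
  haveI : NeZero (ℓ ^ r) := ⟨pow_ne_zero _ hℓ.ne_zero⟩
  set π : ZMod (ℓ ^ (r + 1)) →+* ZMod (ℓ ^ r) :=
    ZMod.castHom (pow_dvd_pow ℓ (Nat.le_succ r)) (ZMod (ℓ ^ r)) with hπdef
  set ρ' : ZMod (ℓ ^ r) →+* ZMod ℓ :=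
    ZMod.castHom (dvd_pow_self ℓ (by omega : r ≠ 0)) (ZMod ℓ) with hρdef
  let Φ : Matrix (Fin 2) (Fin 2) (ZMod (ℓ ^ (r + 1))) →+
      Matrix (Fin 2) (Fin 2) (ZMod (ℓ ^ r)) := AddMonoidHom.mapMatrix π.toAddMonoidHom
  have hΦ : ∀ M, Φ M = M.map π := fun _ => rfl
  -- a lift of M₀
  set L : Matrix (Fin 2) (Fin 2) (ZMod (ℓ ^ (r + 1))) :=
    M₀.map (fun y => ((y.val : ℕ) : ZMod (ℓ ^ (r + 1)))) with hLdef
  have hπval : ∀ y : ZMod (ℓ ^ r), π ((y.val : ℕ) : ZMod (ℓ ^ (r + 1))) = y := by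
    intro y
    rw [map_natCast, ZMod.natCast_rightInverse y]
  have hL : Φ L = M₀ := by
    ext i j
    show π (L i j) = M₀ i j
    rw [hLdef, Matrix.map_apply, hπval]
  have hsurj : Function.Surjective Φ := by
    intro Y
    refine ⟨Y.map (fun y => ((y.val : ℕ) : ZMod (ℓ ^ (r + 1)))), ?_⟩
    ext i j
    show π _ = Y i j
    rw [Matrix.map_apply, hπval]
  have hrangeΦ : Nat.card Φ.range = (ℓ ^ r) ^ 4 := by
    rw [AddMonoidHom.range_eq_top.mpr hsurj]
    rw [Nat.card_congr AddSubgroup.topEquiv.toEquiv, card_matrix]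
  constructor
  · have e1 : {M : Matrix (Fin 2) (Fin 2) (ZMod (ℓ ^ (r + 1))) // M.map π = M₀} ≃
        {M // Φ M = Φ L} := Equiv.subtypeEquivRight (fun M => by rw [hΦ, hL])
    have key := fiber_card_mul Φ L
    rw [hrangeΦ, card_matrix] at key
    rw [Nat.card_congr e1]
    have hpos : 0 < (ℓ ^ r) ^ 4 := pow_pos (pow_pos hℓ.pos r) 4
    refine Nat.eq_of_mul_eq_mul_right hpos ?_
    rw [key]
    ring
  · -- part 2
    set A : Matrix (Fin 2) (Fin 2) (ZMod (ℓ ^ (r + 1))) := L - 1 with hAdef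
    have hΦA : Φ A = M₀ - 1 := by
      rw [hAdef, map_sub, hL]
      congr 1
      exact Matrix.map_one π (map_zero π) (map_one π)
    have hπA : ∀ i j, π (A i j) = (M₀ - 1) i j := by
      intro i j; rw [← hΦA]; rfl
    have hdetA : π A.det = 0 := by
      rw [RingHom.map_det]
      have h : π.mapMatrix A = M₀ - 1 := hΦA
      rw [h, hdet]
    obtain ⟨s, hs⟩ : ∃ t, μ ℓ r t = -A.det :=
      (ker_iff hℓ _).mp (by rw [map_neg, hdetA, neg_zero])
    have hD : ∀ i j, ((A i j).val : ZMod ℓ) =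
        M₀.map ρ' i j - (1 : Matrix (Fin 2) (Fin 2) (ZMod ℓ)) i j := by
      intro i j
      have h1 : ρ' (π (A i j)) = ((A i j).val : ZMod ℓ) := by
        have h2 : π (A i j) = (((A i j).val : ℕ) : ZMod (ℓ ^ r)) := by
          rw [hπdef, ZMod.castHom_apply, ← ZMod.natCast_val]
        rw [h2, map_natCast]
      rw [← h1, hπA, Matrix.sub_apply, map_sub, Matrix.map_apply]
      congr 1
      rw [Matrix.one_apply, Matrix.one_apply]
      split_ifs <;> simp
    have hex : ∃ i j, ((A i j).val : ZMod ℓ) ≠ 0 := by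
      by_contra hcon
      push_neg at hcon
      apply hnotI
      ext i j
      have h := hcon i j
      rw [hD i j] at h
      exact sub_eq_zero.mp h
    let G : Matrix (Fin 2) (Fin 2) (ZMod ℓ) →+ ZMod (ℓ ^ (r + 1)) :=
      { toFun := fun N => A 0 0 * μ ℓ r (N 1 1) + A 1 1 * μ ℓ r (N 0 0)
          - A 0 1 * μ ℓ r (N 1 0) - A 1 0 * μ ℓ r (N 0 1)
        map_zero' := by simp
        map_add' := by
          intro N N'
          simp only [Matrix.add_apply, map_add]
          ring }
    have hGdef : ∀ N, G N = A 0 0 * μ ℓ r (N 1 1) + A 1 1 * μ ℓ r (N 0 0)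
          - A 0 1 * μ ℓ r (N 1 0) - A 1 0 * μ ℓ r (N 0 1) := fun _ => rfl
    have GF : ∀ N, G N = μ ℓ r (((A 0 0).val : ZMod ℓ) * N 1 1 + ((A 1 1).val : ZMod ℓ) * N 0 0
        - ((A 0 1).val : ZMod ℓ) * N 1 0 - ((A 1 0).val : ZMod ℓ) * N 0 1) := by
      intro N
      rw [hGdef, mul_μ hℓ, mul_μ hℓ, mul_μ hℓ, mul_μ hℓ, ← map_add, ← map_sub, ← map_sub]
    have hsolve : ∀ t : ZMod ℓ, ∃ N, G N = μ ℓ r t := by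
      obtain ⟨i, j, hij⟩ := hex
      intro t
      fin_cases i <;> fin_cases j
      · refine ⟨Matrix.of ![![0, 0], ![0, (((A 0 0).val : ZMod ℓ))⁻¹ * t]], ?_⟩
        rw [GF]
        apply congrArg
        simp
        rw [mul_inv_cancel_left₀ (by rwa [ZMod.natCast_val] at hij)]
      · refine ⟨Matrix.of ![![0, 0], ![-((((A 0 1).val : ZMod ℓ))⁻¹ * t), 0]], ?_⟩
        rw [GF]
        apply congrArg
        simp
        rw [mul_inv_cancel_left₀ (by rwa [ZMod.natCast_val] at hij)]
      · refine ⟨Matrix.of ![![0, -((((A 1 0).val : ZMod ℓ))⁻¹ * t)], ![0, 0]], ?_⟩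
        rw [GF]
        apply congrArg
        simp
        rw [mul_inv_cancel_left₀ (by rwa [ZMod.natCast_val] at hij)]
      · refine ⟨Matrix.of ![![(((A 1 1).val : ZMod ℓ))⁻¹ * t, 0], ![0, 0]], ?_⟩
        rw [GF]
        apply congrArg
        simp
        rw [mul_inv_cancel_left₀ (by rwa [ZMod.natCast_val] at hij)]
    have expand : ∀ K : Matrix (Fin 2) (Fin 2) (ZMod (ℓ ^ (r + 1))),
        (∀ i j, π (K i j) = 0) →
        (A + K).det = A.det + (A 0 0 * K 1 1 + A 1 1 * K 0 0
          - A 0 1 * K 1 0 - A 1 0 * K 0 1) := by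
      intro K hK
      have h1 := mul_ker_eq_zero hℓ (hK 0 0) (hK 1 1) hr
      have h2 := mul_ker_eq_zero hℓ (hK 0 1) (hK 1 0) hr
      simp only [Matrix.det_fin_two, Matrix.add_apply]
      linear_combination h1 - h2
    set X : Matrix (Fin 2) (Fin 2) (ZMod ℓ) → Matrix (Fin 2) (Fin 2) (ZMod (ℓ ^ (r + 1))) :=
      fun N => (μ ℓ r).mapMatrix N with hXdef
    have hπX : ∀ N i j, π (X N i j) = 0 := by
      intro N i j
      exact (ker_iff hℓ _).mpr ⟨N i j, rfl⟩
    have hcond : ∀ N : Matrix (Fin 2) (Fin 2) (ZMod ℓ),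
        ((L + X N).map π = M₀ ∧ ((L + X N) - 1).det = 0) ↔ G N = -A.det := by
      intro N
      have hmapa : (L + X N).map π = M₀ := by
        show Φ (L + X N) = M₀
        rw [map_add, hL]
        have hz : Φ (X N) = 0 := by
          ext i j
          rw [Matrix.zero_apply]
          exact hπX N i j
        rw [hz, add_zero]
      have harr : L + X N - 1 = A + X N := by rw [hAdef]; abel
      have hGX : A 0 0 * X N 1 1 + A 1 1 * X N 0 0
          - A 0 1 * X N 1 0 - A 1 0 * X N 0 1 = G N := rfl
      constructor
      · rintro ⟨-, h2⟩
        rw [harr, expand (X N) (hπX N), hGX] at h2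
        linear_combination h2
      · intro h
        refine ⟨hmapa, ?_⟩
        rw [harr, expand (X N) (hπX N), hGX, h]
        ring
    let f2 : {N : Matrix (Fin 2) (Fin 2) (ZMod ℓ) // G N = -A.det} →
        {M : Matrix (Fin 2) (Fin 2) (ZMod (ℓ ^ (r + 1))) //
          M.map π = M₀ ∧ (M - 1).det = 0} :=
      fun N => ⟨L + X N.1, (hcond N.1).mpr N.2⟩
    have hbij : Function.Bijective f2 := by
      constructor
      · rintro ⟨N, hN⟩ ⟨N', hN'⟩ h
        have h' : L + X N = L + X N' := congrArg Subtype.val h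
        have h'' : X N = X N' := add_left_cancel h'
        apply Subtype.ext
        ext i j
        exact μ_inj hℓ (congrFun (congrFun h'' i) j)
      · rintro ⟨M, hM1, hM2⟩
        have hΦM : Φ (M - L) = 0 := by
          rw [map_sub, hL, hΦ, hM1, sub_self]
        have hK : ∀ i j, π ((M - L) i j) = 0 := by
          intro i j
          calc π ((M - L) i j) = Φ (M - L) i j := rfl
            _ = (0 : Matrix (Fin 2) (Fin 2) (ZMod (ℓ ^ r))) i j := by rw [hΦM]
            _ = 0 := Matrix.zero_apply i j
        choose N hN using fun i j => (ker_iff hℓ ((M - L) i j)).mp (hK i j)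
        have hXN : X (Matrix.of N) = M - L := by
          ext i j
          exact hN i j
        have hM' : M = L + X (Matrix.of N) := by rw [hXN]; abel
        refine ⟨⟨Matrix.of N, (hcond (Matrix.of N)).mp (by rw [← hM']; exact ⟨hM1, hM2⟩)⟩, ?_⟩
        apply Subtype.ext
        show L + X (Matrix.of N) = M
        rw [hXN]; abel
    obtain ⟨N₀, hN₀⟩ := hsolve s
    have hN₀' : G N₀ = -A.det := by rw [hN₀, hs]
    have e2 : {M : Matrix (Fin 2) (Fin 2) (ZMod (ℓ ^ (r + 1))) //
        M.map π = M₀ ∧ (M - 1).det = 0} ≃ {N // G N = G N₀} :=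
      (Equiv.ofBijective f2 hbij).symm.trans (Equiv.subtypeEquivRight (fun N => by rw [hN₀']))
    rw [Nat.card_congr e2]
    have key := fiber_card_mul G N₀
    have hrangeG : Nat.card G.range = ℓ := by
      have hset : (G.range : Set (ZMod (ℓ ^ (r + 1)))) = Set.range (μ ℓ r) := by
        ext z
        simp only [AddMonoidHom.coe_range, Set.mem_range]
        constructor
        · rintro ⟨N, rfl⟩
          exact ⟨_, (GF N).symm⟩
        · rintro ⟨t, rfl⟩
          obtain ⟨N, hN⟩ := hsolve t
          exact ⟨N, hN⟩
      rw [show Nat.card G.range = Nat.card (Set.range ⇑(μ ℓ r)) from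
        Nat.card_congr (Equiv.setCongr hset), Nat.card_range_of_injective (μ_inj hℓ),
        Nat.card_zmod]
    rw [hrangeG, card_matrix] at key
    refine Nat.eq_of_mul_eq_mul_right hℓ.pos ?_
    rw [key]
    ring
end
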